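/- arXiv:2009.06684 — 2 statements merged into one kernel-verified Lean document; each statement's English description precedes it below -/
import Mathlib

section
/- Define the Bernstein operator S_m on symmetric functions by S_m = Σ_{c≥0} (-1)^c M_{h_{m+c}} ∘ e_c^⊥ (where M_{h_k} is multiplication by the complete homogeneous symmetric function h_k, and e_c^⊥ is the Hall-adjoint of multiplication by the elementary symmetric function e_c; terms with m+c < 0 are zero). Then for any partition μ = (μ_1 ≥ ... ≥ μ_L) and any integer m ≥ μ_1, S_m(s_μ) = s_{(m, μ_1, ..., μ_L)}. -/
open scoped Classical

/-- An integer partition: a weakly decreasing sequence of naturals, eventually zero. -/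
structure Ptn where
  parts : ℕ → ℕ
  antitone : ∀ i, parts (i + 1) ≤ parts i
  eventually_zero : ∃ N, ∀ n, N ≤ n → parts n = 0

/-- Number of cells of a partition. -/
noncomputable def Ptn.size (μ : Ptn) : ℕ := ∑ᶠ i, μ.parts i

/-- Containment of partitions. -/
def PtnSub (ν μ : Ptn) : Prop := ∀ i, ν.parts i ≤ μ.parts i

/-- `HS c lam mu` : lam/mu is a horizontal strip of `c` cells. -/
def HS (c : ℕ) (lam mu : Ptn) : Prop :=
  PtnSub mu lam ∧ lam.size = mu.size + c ∧ ∀ i, lam.parts (i + 1) ≤ mu.parts i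

/-- `VS c lam mu` : lam/mu is a vertical strip of `c` cells. -/
def VS (c : ℕ) (lam mu : Ptn) : Prop :=
  PtnSub mu lam ∧ lam.size = mu.size + c ∧ ∀ i, lam.parts i ≤ mu.parts i + 1

variable (F : Type) [Field F]

/-- The Schur basis element `s_μ`, viewed as a coefficient function on partitions. -/
noncomputable def sB (μ : Ptn) : Ptn → F := fun lam => if lam = μ then 1 else 0

/-- Multiplication by the complete homogeneous symmetric function `h_k` (zero for `k < 0`),
acting on Schur coefficient functions via the Pieri rule. -/
noncomputable def Mh (k : ℤ) (P : Ptn → F) : Ptn → F :=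
  fun lam => if k < 0 then 0 else ∑ᶠ (mu : Ptn) (_ : HS k.toNat lam mu), P mu

/-- The Hall-adjoint `e_c^⊥` of multiplication by `e_c`, via the dual Pieri rule. -/
noncomputable def eperp (c : ℕ) (P : Ptn → F) : Ptn → F :=
  fun nu => ∑ᶠ (mu : Ptn) (_ : VS c mu nu), P mu

/-- The Hall-adjoint `h_c^⊥` of multiplication by `h_c`, via the dual Pieri rule. -/
noncomputable def hperp (c : ℕ) (P : Ptn → F) : Ptn → F :=
  fun nu => ∑ᶠ (mu : Ptn) (_ : HS c mu nu), P mu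

/-- The Bernstein creation operator `S_m = Σ_{c≥0} (-1)^c M_{h_{m+c}} ∘ e_c^⊥`. -/
noncomputable def Sop (m : ℤ) (P : Ptn → F) : Ptn → F :=
  fun lam => ∑ᶠ c : ℕ, (-1 : F) ^ c * Mh F (m + c) (eperp F c P) lam

/-- The Jing creation operator `H_m = Σ_{c≥0} q^c S_{m+c} ∘ h_c^⊥`. -/
noncomputable def Hop (q : F) (m : ℤ) (P : Ptn → F) : Ptn → F :=
  fun lam => ∑ᶠ c : ℕ, q ^ c * Sop F (m + c) (hperp F c P) lam

/-- The empty partition. -/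
def ptnZero : Ptn := ⟨fun _ => 0, fun _ => le_refl 0, ⟨0, fun _ _ => rfl⟩⟩

/-- The constant symmetric function `1 = s_∅`. -/
noncomputable def oneSym : Ptn → F := sB F ptnZero

/-!
The coefficient of `s_λ` in `S_M(s_μ)` is the signed count `∑ (-1)^c` over pairs `(c, ν)` with
`μ/ν` a vertical `c`-strip and `λ/ν` a horizontal `(M + c)`-strip. If some row has
`λ_{i+1} < μ_i ≤ λ_i`, swapping `ν_i` between `μ_i - 1` and `μ_i` is a sign-reversing involution
of these pairs. Otherwise each pair forces `μ_i ∈ {λ_{i+1}, λ_i + 1}`; since `|λ| = |μ| + M`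
and `M ≥ μ_1`, this leaves only `λ = (M, μ)`, whose single pair is `(0, μ)`.
-/

namespace Ptn

@[ext]
theorem ext {a b : Ptn} (h : a.parts = b.parts) : a = b := by
  cases a; cases b; congr

theorem size_eq_sum_range (μ : Ptn) {N : ℕ} (hN : ∀ n, N ≤ n → μ.parts n = 0) :
    μ.size = ∑ i ∈ Finset.range N, μ.parts i :=
  finsum_eq_sum_of_support_subset _ fun i hi => by
    simp only [Finset.coe_range, Set.mem_Iio]
    by_contra h
    exact hi (hN i (not_lt.1 h))

theorem size_mono {a b : Ptn} (h : PtnSub a b) : a.size ≤ b.size := by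
  obtain ⟨N, hN⟩ := b.eventually_zero
  have ha : ∀ n, N ≤ n → a.parts n = 0 := fun n hn => by
    have := h n; have := hN n hn; omega
  rw [a.size_eq_sum_range ha, b.size_eq_sum_range hN]
  exact Finset.sum_le_sum fun i _ => h i

theorem size_add_parts_eq {a b : Ptn} {i₀ : ℕ} (h : ∀ i, i ≠ i₀ → a.parts i = b.parts i) :
    a.size + b.parts i₀ = b.size + a.parts i₀ := by
  obtain ⟨Na, hNa⟩ := a.eventually_zero
  obtain ⟨Nb, hNb⟩ := b.eventually_zero
  set N := max (max Na Nb) (i₀ + 1)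
  have hi₀ : i₀ ∈ Finset.range N := Finset.mem_range.2 (by omega)
  rw [a.size_eq_sum_range (N := N) fun n hn => hNa n (by omega),
    b.size_eq_sum_range (N := N) fun n hn => hNb n (by omega),
    ← Finset.add_sum_erase _ _ hi₀, ← Finset.add_sum_erase _ _ hi₀,
    Finset.sum_congr rfl fun i hi => h i (Finset.ne_of_mem_erase hi)]
  ring

theorem finite_setOf_ptnSub (lam : Ptn) : {ν : Ptn | PtnSub ν lam}.Finite := by
  obtain ⟨N, hN⟩ := lam.eventually_zero
  refine Set.Finite.of_finite_image (f := fun ν (i : Fin N) => ν.parts i) ?_ ?_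
  · refine (Set.Finite.pi fun i : Fin N => Set.finite_Iic (lam.parts i)).subset ?_
    rintro _ ⟨ν, hν, rfl⟩ i -
    exact hν i
  · intro a ha b hb hab
    ext n
    by_cases hn : n < N
    · exact congrFun hab ⟨n, hn⟩
    · have := ha n; have := hb n; have := hN n (not_lt.1 hn); omega

def tail (μ : Ptn) : Ptn where
  parts i := μ.parts (i + 1)
  antitone i := μ.antitone (i + 1)
  eventually_zero := μ.eventually_zero.imp fun _ hN n hn => hN (n + 1) (by omega)

theorem size_eq_parts_zero_add_size_tail (μ : Ptn) : μ.size = μ.parts 0 + μ.tail.size := by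
  obtain ⟨N, hN⟩ := μ.eventually_zero
  rw [μ.size_eq_sum_range (N := N + 1) fun n hn => hN n (by omega),
    μ.tail.size_eq_sum_range (N := N) fun n hn => hN (n + 1) (by omega),
    Finset.sum_range_succ']
  simp only [tail]
  ring

def cons (M : ℕ) (μ : Ptn) (h : μ.parts 0 ≤ M) : Ptn where
  parts
    | 0 => M
    | i + 1 => μ.parts i
  antitone
    | 0 => h
    | i + 1 => μ.antitone i
  eventually_zero := by
    obtain ⟨N, hN⟩ := μ.eventually_zero
    refine ⟨N + 1, fun n hn => ?_⟩
    obtain ⟨i, rfl⟩ : ∃ i, n = i + 1 := ⟨n - 1, by omega⟩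
    exact hN i (by omega)

section cons

variable {M : ℕ} {μ : Ptn} {h : μ.parts 0 ≤ M}

theorem size_cons : (cons M μ h).size = M + μ.size :=
  size_eq_parts_zero_add_size_tail _

theorem ptnSub_cons : PtnSub μ (cons M μ h)
  | 0 => h
  | i + 1 => μ.antitone i

theorem eq_cons_of_parts_zero_of_tail {lam : Ptn} (h0 : lam.parts 0 = M) (ht : lam.tail = μ) :
    lam = cons M μ h := by
  ext i
  cases i with
  | zero => exact h0
  | succ i => exact congrFun (congrArg parts ht) i

end cons

def ofInterlace (lam : Ptn) (f : ℕ → ℕ) (hf : ∀ i, lam.parts (i + 1) ≤ f i ∧ f i ≤ lam.parts i) :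
    Ptn where
  parts := f
  antitone i := (hf (i + 1)).2.trans (hf i).1
  eventually_zero := lam.eventually_zero.imp fun _ hN n hn =>
    Nat.eq_zero_of_le_zero ((hf n).2.trans_eq (hN n hn))

end Ptn

def stripPairs (M : ℕ) (μ lam : Ptn) : Set (ℕ × Ptn) :=
  {p | VS p.1 μ p.2 ∧ HS (M + p.1) lam p.2}

section stripPairs

variable {M : ℕ} {μ lam : Ptn} {p : ℕ × Ptn}

theorem size_eq_of_mem_stripPairs (hp : p ∈ stripPairs M μ lam) : lam.size = μ.size + M := by
  obtain ⟨⟨-, hμ, -⟩, -, hlam, -⟩ := hp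
  omega

theorem le_parts_zero_of_mem_stripPairs (hp : p ∈ stripPairs M μ lam) : M ≤ lam.parts 0 := by
  have htail : PtnSub lam.tail μ := fun i => (hp.2.2.2 i).trans (hp.1.1 i)
  have := size_eq_of_mem_stripPairs hp
  have := lam.size_eq_parts_zero_add_size_tail
  have := Ptn.size_mono htail
  omega

theorem finite_stripPairs (M : ℕ) (μ lam : Ptn) : (stripPairs M μ lam).Finite :=
  ((Set.finite_Iic μ.size).prod (Ptn.finite_setOf_ptnSub lam)).subset fun p hp =>
    ⟨show p.1 ≤ μ.size by have := hp.1.2.1; omega, hp.2.1⟩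

theorem stripPairs_cons (h : μ.parts 0 ≤ M) : stripPairs M μ (Ptn.cons M μ h) = {(0, μ)} := by
  ext ⟨c, ν⟩
  simp only [Set.mem_singleton_iff, Prod.mk.injEq]
  constructor
  · intro hp
    obtain rfl : μ = ν := Ptn.ext (funext fun i => le_antisymm (hp.2.2.2 i) (hp.1.1 i))
    have hc : μ.size = μ.size + c := hp.1.2.1
    exact ⟨by omega, rfl⟩
  · rintro ⟨rfl, rfl⟩
    exact ⟨⟨fun _ => le_rfl, rfl, fun _ => Nat.le_succ _⟩,
      ⟨Ptn.ptnSub_cons, by rw [Ptn.size_cons]; ring, fun _ => le_rfl⟩⟩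

theorem eq_cons_of_mem_stripPairs (h : μ.parts 0 ≤ M) (hp : p ∈ stripPairs M μ lam)
    (hno : ∀ i, lam.parts (i + 1) < μ.parts i → lam.parts i < μ.parts i) :
    lam = Ptn.cons M μ h := by
  have hM := le_parts_zero_of_mem_stripPairs hp
  have hsize := size_eq_of_mem_stripPairs hp
  obtain ⟨⟨hsub, -, hvs⟩, ⟨hsub', -, hhs⟩⟩ := hp
  have hrow : ∀ i, μ.parts i = lam.parts (i + 1) ∨ μ.parts i = lam.parts i + 1 := fun i => by
    have := hsub i; have := hvs i; have := hsub' i; have := hhs i; have := hno i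
    omega
  have htail : lam.tail = μ := by
    ext i
    induction i with
    | zero => have := hrow 0; simp only [Ptn.tail]; omega
    | succ k ih =>
      have := hrow (k + 1); have := μ.antitone k
      simp only [Ptn.tail] at ih ⊢
      omega
  refine Ptn.eq_cons_of_parts_zero_of_tail ?_ htail
  have := lam.size_eq_parts_zero_add_size_tail
  rw [htail] at this
  omega

end stripPairs

section flip

variable {M : ℕ} {μ lam : Ptn} {i₀ : ℕ}

theorem interlace_flip (hlt : lam.parts (i₀ + 1) < μ.parts i₀) (hle : μ.parts i₀ ≤ lam.parts i₀)
    {p : ℕ × Ptn} (hp : p ∈ stripPairs M μ lam) (i : ℕ) :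
    lam.parts (i + 1) ≤ Function.update p.2.parts i₀ (2 * μ.parts i₀ - 1 - p.2.parts i₀) i ∧
      Function.update p.2.parts i₀ (2 * μ.parts i₀ - 1 - p.2.parts i₀) i ≤ lam.parts i := by
  obtain ⟨⟨hsub, -, hvs⟩, ⟨hsub', -, hhs⟩⟩ := hp
  rcases eq_or_ne i i₀ with rfl | hi
  · have := hsub i; have := hvs i
    simp only [Function.update_self]
    omega
  · simp only [Function.update_of_ne hi]
    exact ⟨hhs i, hsub' i⟩

/-- The sign-reversing involution: swap `ν_{i₀}` between `μ_{i₀} - 1` and `μ_{i₀}`. -/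
noncomputable def flipStrip (hlt : lam.parts (i₀ + 1) < μ.parts i₀)
    (hle : μ.parts i₀ ≤ lam.parts i₀) (p : ℕ × Ptn) (hp : p ∈ stripPairs M μ lam) : ℕ × Ptn :=
  let ν := Ptn.ofInterlace lam _ (interlace_flip hlt hle hp)
  (μ.size - ν.size, ν)

variable (hlt : lam.parts (i₀ + 1) < μ.parts i₀) (hle : μ.parts i₀ ≤ lam.parts i₀)
  {p : ℕ × Ptn} (hp : p ∈ stripPairs M μ lam)

theorem flipStrip_parts :
    (flipStrip hlt hle p hp).2.parts =
      Function.update p.2.parts i₀ (2 * μ.parts i₀ - 1 - p.2.parts i₀) :=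
  rfl

theorem flipStrip_fst_eq :
    (flipStrip hlt hle p hp).1 = μ.size - (flipStrip hlt hle p hp).2.size :=
  rfl

theorem flipStrip_ptnSub : PtnSub (flipStrip hlt hle p hp).2 μ := by
  intro i
  rw [flipStrip_parts]
  rcases eq_or_ne i i₀ with rfl | hi
  · have := hp.1.2.2 i
    rw [Function.update_self]
    omega
  · rw [Function.update_of_ne hi]
    exact hp.1.1 i

theorem size_flipStrip_add :
    (flipStrip hlt hle p hp).2.size + p.2.parts i₀ =
      p.2.size + (2 * μ.parts i₀ - 1 - p.2.parts i₀) := by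
  have := Ptn.size_add_parts_eq (a := (flipStrip hlt hle p hp).2) (b := p.2) (i₀ := i₀)
    fun i hi => by rw [flipStrip_parts, Function.update_of_ne hi]
  rwa [flipStrip_parts, Function.update_self] at this

theorem flipStrip_mem : flipStrip hlt hle p hp ∈ stripPairs M μ lam := by
  have hsize := size_eq_of_mem_stripPairs hp
  have hsize' := Ptn.size_mono (flipStrip_ptnSub hlt hle hp)
  have hinter := interlace_flip hlt hle hp
  have hfst := flipStrip_fst_eq hlt hle hp
  refine ⟨⟨flipStrip_ptnSub hlt hle hp, by omega, fun i => ?_⟩,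
    ⟨fun i => (hinter i).2, by omega, fun i => (hinter i).1⟩⟩
  rw [flipStrip_parts]
  rcases eq_or_ne i i₀ with rfl | hi
  · have := hp.1.1 i
    rw [Function.update_self]
    omega
  · rw [Function.update_of_ne hi]
    exact hp.1.2.2 i

theorem flipStrip_parts_self_ne : (flipStrip hlt hle p hp).2.parts i₀ ≠ p.2.parts i₀ := by
  have := hp.1.1 i₀; have := hp.1.2.2 i₀
  rw [flipStrip_parts, Function.update_self]
  omega

theorem flipStrip_fst :
    (flipStrip hlt hle p hp).1 + 1 = p.1 ∨ (flipStrip hlt hle p hp).1 = p.1 + 1 := by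
  have := size_flipStrip_add hlt hle hp
  have := Ptn.size_mono (flipStrip_ptnSub hlt hle hp)
  have := hp.1.2.1
  have := hp.1.1 i₀; have := hp.1.2.2 i₀
  rw [flipStrip_fst_eq]
  omega

theorem flipStrip_flipStrip (hp' : flipStrip hlt hle p hp ∈ stripPairs M μ lam) :
    flipStrip hlt hle (flipStrip hlt hle p hp) hp' = p := by
  have hsnd : (flipStrip hlt hle (flipStrip hlt hle p hp) hp').2 = p.2 := by
    ext i
    rw [flipStrip_parts, flipStrip_parts]
    rcases eq_or_ne i i₀ with rfl | hi
    · have := hp.1.1 i; have := hp.1.2.2 i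
      simp only [Function.update_self]
      omega
    · simp only [Function.update_of_ne hi]
  refine Prod.ext ?_ hsnd
  have := hp.1.2.1
  rw [flipStrip_fst_eq, hsnd]
  omega

end flip

section coefficient

variable {F}

theorem finsum_stripPairs_eq_zero_of_flip {M : ℕ} {μ lam : Ptn} {i₀ : ℕ}
    (hlt : lam.parts (i₀ + 1) < μ.parts i₀) (hle : μ.parts i₀ ≤ lam.parts i₀) :
    ∑ᶠ p ∈ stripPairs M μ lam, (-1 : F) ^ p.1 = 0 := by
  have hfin := finite_stripPairs M μ lam
  rw [finsum_mem_eq_finite_toFinset_sum _ hfin]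
  have mem : ∀ p ∈ hfin.toFinset, p ∈ stripPairs M μ lam := fun _ => hfin.mem_toFinset.1
  refine Finset.sum_involution (fun p hp => flipStrip hlt hle p (mem p hp)) (fun p hp => ?_)
    (fun p hp _ h => flipStrip_parts_self_ne hlt hle (mem p hp) (congrArg (·.2.parts i₀) h))
    (fun p hp => hfin.mem_toFinset.2 (flipStrip_mem hlt hle (mem p hp)))
    (fun p hp => flipStrip_flipStrip hlt hle (mem p hp) _)
  rcases flipStrip_fst hlt hle (mem p hp) with h | h
  · rw [← h]; ring
  · rw [h]; ring

theorem finsum_stripPairs_eq_zero {M : ℕ} {μ lam : Ptn} (h : μ.parts 0 ≤ M)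
    (hne : lam ≠ Ptn.cons M μ h) : ∑ᶠ p ∈ stripPairs M μ lam, (-1 : F) ^ p.1 = 0 := by
  by_cases hflip : ∃ i, lam.parts (i + 1) < μ.parts i ∧ μ.parts i ≤ lam.parts i
  · obtain ⟨i, hlt, hle⟩ := hflip
    exact finsum_stripPairs_eq_zero_of_flip hlt hle
  · simp only [not_exists, not_and, not_le] at hflip
    have hempty : stripPairs M μ lam = ∅ :=
      Set.eq_empty_of_forall_notMem fun p hp => hne (eq_cons_of_mem_stripPairs h hp hflip)
    rw [hempty, finsum_mem_empty]

theorem eperp_sB_apply (c : ℕ) (μ ν : Ptn) :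
    eperp F c (sB F μ) ν = if VS c μ ν then 1 else 0 := by
  unfold eperp
  rw [finsum_eq_single _ μ fun x hx => by rw [finsum_eq_if]; simp [sB, hx], finsum_eq_if]
  simp [sB]

theorem Sop_sB_apply (M : ℕ) (μ lam : Ptn) :
    Sop F M (sB F μ) lam = ∑ᶠ p ∈ stripPairs M μ lam, (-1 : F) ^ p.1 := by
  have hterm : ∀ c : ℕ, (-1 : F) ^ c * Mh F (M + c) (eperp F c (sB F μ)) lam =
      ∑ᶠ ν, (stripPairs M μ lam).indicator (fun p => (-1 : F) ^ p.1) (c, ν) := by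
    intro c
    have hk : ((M : ℤ) + c).toNat = M + c := by omega
    rw [Mh, if_neg (by omega), hk, mul_finsum]
    refine finsum_congr fun ν => ?_
    rw [finsum_eq_if, eperp_sB_apply]
    by_cases hh : HS (M + c) lam ν <;> by_cases hv : VS c μ ν <;>
      simp [Set.indicator, stripPairs, hh, hv]
  rw [Sop, finsum_congr hterm, finsum_mem_def, finsum_curry]
  exact (finite_stripPairs M μ lam).subset (Set.support_indicator_subset)

end coefficient

/-- Bernstein creation: for any partition `μ` and any integer `m ≥ μ₁`,
`S_m(s_μ) = s_{(m, μ₁, μ₂, ...)}`, the Schur function of the partition obtained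
by prepending a new largest part `m`. -/
theorem bernstein_creates_row (μ : Ptn) (m : ℤ) (hm : (μ.parts 0 : ℤ) ≤ m) :
    ∃ ν : Ptn, (ν.parts 0 : ℤ) = m ∧ (∀ i, ν.parts (i + 1) = μ.parts i) ∧
      Sop ℚ m (sB ℚ μ) = sB ℚ ν := by
  lift m to ℕ using (Int.natCast_nonneg _).trans hm
  have h : μ.parts 0 ≤ m := by exact_mod_cast hm
  refine ⟨Ptn.cons m μ h, rfl, fun _ => rfl, funext fun lam => ?_⟩
  rw [Sop_sB_apply]
  by_cases hlam : lam = Ptn.cons m μ h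
  · rw [hlam, stripPairs_cons, finsum_mem_singleton, sB, if_pos rfl, pow_zero]
  · rw [finsum_stripPairs_eq_zero h hlam, sB, if_neg hlam]
end

section
/- Define the Jing operator H_m = Σ_{c≥0} q^c S_{m+c} ∘ h_c^⊥ on symmetric functions over ℚ(q), where S_b is the Bernstein operator. Then for every list of integers α = (α_1, ..., α_L), all coefficients in the Schur expansion of H_{α_1} ∘ ... ∘ H_{α_L}(1) are polynomials in q with integer coefficients. -/
open scoped Classical

variable (F : Type) [Field F]

/-! Each coefficient of `H_m P` is obtained from coefficients of `P` by sums, signs and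
multiplication by powers of `q`, so any subring of `F` containing `q` and all coefficients of
`P` contains those of `H_m P`. Finiteness of the Pieri sums is not needed: a `∑ᶠ` of elements
of a subring lies in it also when it takes the junk value `0`. -/

theorem finsum_mem_of_forall_mem {α : Sort*} {M A : Type*} [AddCommMonoid M] [SetLike A M]
    [AddSubmonoidClass A M] (S : A) {f : α → M} (h : ∀ i, f i ∈ S) : ∑ᶠ i, f i ∈ S :=
  finsum_induction (· ∈ S) (zero_mem S) (fun _ _ => add_mem) h

section SubringInvariance

variable {F} (S : Subring F) {P : Ptn → F}

theorem Mh_mem (k : ℤ) (hP : ∀ μ, P μ ∈ S) (lam : Ptn) : Mh F k P lam ∈ S := by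
  unfold Mh
  split_ifs
  · exact zero_mem S
  · exact finsum_mem_of_forall_mem S fun μ => finsum_mem_of_forall_mem S fun _ => hP μ

theorem eperp_mem (c : ℕ) (hP : ∀ μ, P μ ∈ S) (ν : Ptn) : eperp F c P ν ∈ S :=
  finsum_mem_of_forall_mem S fun μ => finsum_mem_of_forall_mem S fun _ => hP μ

theorem hperp_mem (c : ℕ) (hP : ∀ μ, P μ ∈ S) (ν : Ptn) : hperp F c P ν ∈ S :=
  finsum_mem_of_forall_mem S fun μ => finsum_mem_of_forall_mem S fun _ => hP μ

theorem Sop_mem (m : ℤ) (hP : ∀ μ, P μ ∈ S) (lam : Ptn) : Sop F m P lam ∈ S :=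
  finsum_mem_of_forall_mem S fun c =>
    mul_mem (pow_mem (neg_mem (one_mem S)) c) (Mh_mem S _ (eperp_mem S c hP) lam)

theorem Hop_mem {q : F} (hq : q ∈ S) (m : ℤ) (hP : ∀ μ, P μ ∈ S) (lam : Ptn) :
    Hop F q m P lam ∈ S :=
  finsum_mem_of_forall_mem S fun c =>
    mul_mem (pow_mem hq c) (Sop_mem S _ (hperp_mem S c hP) lam)

theorem oneSym_mem (lam : Ptn) : oneSym F lam ∈ S := by
  unfold oneSym sB
  split_ifs
  · exact one_mem S
  · exact zero_mem S

theorem foldr_Hop_oneSym_mem {q : F} (hq : q ∈ S) (αs : List ℤ) (lam : Ptn) :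
    List.foldr (fun a P => Hop F q a P) (oneSym F) αs lam ∈ S := by
  induction αs generalizing lam with
  | nil => exact oneSym_mem S lam
  | cons a αs ih => exact Hop_mem S hq a ih lam

end SubringInvariance

/-- Over the field `F = ℚ(q)` of rational functions, with `q` the indeterminate, and with
the Jing operators `H_m = Σ_{c≥0} q^c S_{m+c} ∘ h_c^⊥`: for every list of integers
`α = (α_1, ..., α_L)`, all coefficients in the Schur expansion of
`H_{α_1} ∘ ... ∘ H_{α_L} (1)` are polynomials in `q` with integer coefficients. -/
theorem jing_schur_coeffs_int_poly (αs : List ℤ) :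
    ∀ lam : Ptn,
      ∃ p : Polynomial ℤ,
        List.foldr (fun (a : ℤ) (P : Ptn → RatFunc ℚ) => Hop (RatFunc ℚ) RatFunc.X a P)
            (oneSym (RatFunc ℚ)) αs lam =
          algebraMap (Polynomial ℚ) (RatFunc ℚ) (p.map (Int.castRingHom ℚ)) := by
  let intPolys : Subring (RatFunc ℚ) :=
    ((algebraMap (Polynomial ℚ) (RatFunc ℚ)).comp
      (Polynomial.mapRingHom (Int.castRingHom ℚ))).range
  have hX : RatFunc.X ∈ intPolys := ⟨Polynomial.X, by simp⟩
  intro lam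
  obtain ⟨p, hp⟩ := foldr_Hop_oneSym_mem intPolys hX αs lam
  exact ⟨p, hp.symm⟩
end
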